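/- arXiv:1508.07502 — 8 statements merged into one kernel-verified Lean document; each statement's English description precedes it below -/
import Mathlib

section
/- Let H, H_1, ..., H_m be finite-dimensional Euclidean spaces with dim H = n, and let L_j^0 : H → H_j be surjective linear maps. Suppose that for every subspace V ⊆ H one has dim V ≤ Σ_j p_j · dim(L_j^0 V), where p_1, ..., p_m ∈ [0,1]. Then there exists δ > 0 such that for all m-tuples of linear maps L = (L_j) with ‖L_j − L_j^0‖ < δ for each j, the same dimension condition dim V ≤ Σ_j p_j · dim(L_j V) holds for every subspace V ⊆ H. -/
/-!
Ranks of linear maps are lower semicontinuous, and on idempotents the rank is even locally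
constant, since `P` and `1 - P` can only gain rank nearby while their ranks add up to `dim E`.
Representing a subspace by its orthogonal projection, the dimension condition for `(L, range Q)`
thus follows from the one for `(L₀, range P)` whenever `(L, Q)` is close to `(L₀, P)`.
The idempotents of norm at most one form a compact set, so finitely many of these
neighbourhoods yield one neighbourhood of `L₀` that works for every subspace.
-/

open Module Filter Topology

namespace ContinuousLinearMap

variable {𝕜 E F : Type*} [NontriviallyNormedField 𝕜]
  [NormedAddCommGroup E] [NormedSpace 𝕜 E] [NormedAddCommGroup F] [NormedSpace 𝕜 F]

theorem finrank_range_add_finrank_range_one_sub [FiniteDimensional 𝕜 E] {P : E →L[𝕜] E}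
    (hP : IsIdempotentElem P) :
    finrank 𝕜 (P : E →ₗ[𝕜] E).range + finrank 𝕜 ((1 - P : E →L[𝕜] E) : E →ₗ[𝕜] E).range =
      finrank 𝕜 E := by
  rw [← LinearMap.finrank_range_add_finrank_ker (P : E →ₗ[𝕜] E),
    LinearMap.IsIdempotentElem.ker_eq_range_one_sub (IsIdempotentElem.toLinearMap hP)]
  rfl

variable [CompleteSpace 𝕜]

theorem eventually_finrank_range_le [FiniteDimensional 𝕜 F] (A₀ : E →L[𝕜] F) :
    ∀ᶠ A : E →L[𝕜] F in 𝓝 A₀,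
      finrank 𝕜 (A₀ : E →ₗ[𝕜] F).range ≤ finrank 𝕜 (A : E →ₗ[𝕜] F).range := by
  have hA₀ : A₀ ∈ {A : E →L[𝕜] F | ↑(finrank 𝕜 (A₀ : E →ₗ[𝕜] F).range) ≤
      (A : E →ₗ[𝕜] F).rank} := by
    simp [LinearMap.rank, finrank_eq_rank]
  filter_upwards [(isOpen_setOfPred_nat_le_rank _).mem_nhds hA₀] with A hA
  simpa [LinearMap.rank, ← finrank_eq_rank] using hA

theorem eventually_finrank_range_eq_of_isIdempotentElem [FiniteDimensional 𝕜 E] {P : E →L[𝕜] E}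
    (hP : IsIdempotentElem P) :
    ∀ᶠ Q : E →L[𝕜] E in 𝓝 P, IsIdempotentElem Q →
      finrank 𝕜 (Q : E →ₗ[𝕜] E).range = finrank 𝕜 (P : E →ₗ[𝕜] E).range := by
  have h_compl : Tendsto (fun Q : E →L[𝕜] E ↦ 1 - Q) (𝓝 P) (𝓝 (1 - P)) :=
    tendsto_const_nhds.sub tendsto_id
  filter_upwards [P.eventually_finrank_range_le,
    h_compl.eventually (1 - P).eventually_finrank_range_le] with Q hPQ hPQ' hQ
  have hP_sum := finrank_range_add_finrank_range_one_sub hP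
  have hQ_sum := finrank_range_add_finrank_range_one_sub hQ
  omega

end ContinuousLinearMap

theorem isCompact_setOf_isIdempotentElem_norm_le_one {𝕜 E : Type*} [NontriviallyNormedField 𝕜]
    [LocallyCompactSpace 𝕜] [NormedAddCommGroup E] [NormedSpace 𝕜 E] [FiniteDimensional 𝕜 E] :
    IsCompact {P : E →L[𝕜] E | IsIdempotentElem P ∧ ‖P‖ ≤ 1} := by
  have := FiniteDimensional.proper 𝕜 (E →L[𝕜] E)
  refine (isCompact_closedBall (0 : E →L[𝕜] E) 1).of_isClosed_subset ?_ fun P hP ↦ ?_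
  · exact (isClosed_eq (continuous_id.mul continuous_id) continuous_id).inter
      (isClosed_le continuous_norm continuous_const)
  · simpa using hP.2

namespace BrascampLieb

variable {ι E : Type*} {F : ι → Type*} [Fintype ι] [NormedAddCommGroup E]
  [∀ j, NormedAddCommGroup (F j)] [∀ j, NormedSpace ℝ (F j)]

def DimensionCondition [NormedSpace ℝ E] (p : ι → ℝ) (L : ∀ j, E →L[ℝ] F j)
    (V : Submodule ℝ E) : Prop :=
  (finrank ℝ V : ℝ) ≤ ∑ j, p j * (finrank ℝ (V.map (L j).toLinearMap) : ℝ)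

theorem eventually_dimensionCondition_range [NormedSpace ℝ E] [FiniteDimensional ℝ E]
    [∀ j, FiniteDimensional ℝ (F j)] {p : ι → ℝ} (hp : ∀ j, 0 ≤ p j)
    {L₀ : ∀ j, E →L[ℝ] F j} {P : E →L[ℝ] E} (hP : IsIdempotentElem P)
    (hL₀ : DimensionCondition p L₀ (P : E →ₗ[ℝ] E).range) :
    ∀ᶠ z : (∀ j, E →L[ℝ] F j) × (E →L[ℝ] E) in 𝓝 (L₀, P),
      IsIdempotentElem z.2 → DimensionCondition p z.1 (z.2 : E →ₗ[ℝ] E).range := by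
  have h_comp (j : ι) : Tendsto (fun z : (∀ j, E →L[ℝ] F j) × (E →L[ℝ] E) ↦ (z.1 j).comp z.2)
      (𝓝 (L₀, P)) (𝓝 ((L₀ j).comp P)) :=
    (((continuous_apply j).comp continuous_fst).clm_comp continuous_snd).tendsto _
  have h_rank := (continuous_snd.tendsto (L₀, P)).eventually
    (ContinuousLinearMap.eventually_finrank_range_eq_of_isIdempotentElem hP)
  have h_image := eventually_all.2 fun j ↦
    (h_comp j).eventually (ContinuousLinearMap.eventually_finrank_range_le ((L₀ j).comp P))
  filter_upwards [h_rank, h_image] with z hz_rank hz_image hz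
  unfold DimensionCondition at hL₀ ⊢
  rw [hz_rank hz]
  refine hL₀.trans (Finset.sum_le_sum fun j _ ↦ mul_le_mul_of_nonneg_left ?_ (hp j))
  rw [← LinearMap.range_comp, ← LinearMap.range_comp]
  exact_mod_cast hz_image j

theorem isOpen_setOf_dimensionCondition [InnerProductSpace ℝ E] [FiniteDimensional ℝ E]
    [∀ j, FiniteDimensional ℝ (F j)] {p : ι → ℝ} (hp : ∀ j, 0 ≤ p j) :
    IsOpen {L : ∀ j, E →L[ℝ] F j | ∀ V, DimensionCondition p L V} := by
  refine isOpen_iff_mem_nhds.2 fun L₀ hL₀ ↦ ?_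
  have hK := isCompact_setOf_isIdempotentElem_norm_le_one (𝕜 := ℝ) (E := E)
  filter_upwards [hK.eventually_forall_of_forall_eventually
    (P := fun L Q ↦ IsIdempotentElem Q → DimensionCondition p L (Q : E →ₗ[ℝ] E).range)
    fun P hP ↦ eventually_dimensionCondition_range hp hP.1 (hL₀ _)] with L hL V
  have hV := V.isIdempotentElem_starProjection
  have hL_V := hL _ ⟨hV, V.starProjection_norm_le⟩ hV
  rwa [Submodule.range_starProjection] at hL_V

end BrascampLieb

theorem brascamp_lieb_dimension_condition_open_general
    (n m : ℕ) (nj : Fin m → ℕ) (p : Fin m → ℝ)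
    (hp : ∀ j, p j ∈ Set.Icc (0 : ℝ) 1)
    (L0 : ∀ j, EuclideanSpace ℝ (Fin n) →L[ℝ] EuclideanSpace ℝ (Fin (nj j)))
    (hdim : ∀ V : Submodule ℝ (EuclideanSpace ℝ (Fin n)),
      (Module.finrank ℝ V : ℝ) ≤
        ∑ j, p j * (Module.finrank ℝ (V.map (L0 j).toLinearMap) : ℝ)) :
    ∃ δ > (0 : ℝ),
      ∀ L : ∀ j, EuclideanSpace ℝ (Fin n) →L[ℝ] EuclideanSpace ℝ (Fin (nj j)),
        (∀ j, ‖L j - L0 j‖ < δ) →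
        ∀ V : Submodule ℝ (EuclideanSpace ℝ (Fin n)),
          (Module.finrank ℝ V : ℝ) ≤
            ∑ j, p j * (Module.finrank ℝ (V.map (L j).toLinearMap) : ℝ) := by
  obtain ⟨δ, hδ, hball⟩ := Metric.isOpen_iff.1
    (BrascampLieb.isOpen_setOf_dimensionCondition fun j ↦ (hp j).1) L0 hdim
  refine ⟨δ, hδ, fun L hL ↦ hball ?_⟩
  rw [Metric.mem_ball, dist_eq_norm, pi_norm_lt_iff hδ]
  exact hL

/-- Openness of the Brascamp--Lieb dimension condition in the linear maps. -/
theorem brascamp_lieb_dimension_condition_open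
    (n m : ℕ) (nj : Fin m → ℕ) (p : Fin m → ℝ)
    (hp : ∀ j, p j ∈ Set.Icc (0 : ℝ) 1)
    (L0 : ∀ j, EuclideanSpace ℝ (Fin n) →L[ℝ] EuclideanSpace ℝ (Fin (nj j)))
    (hsurj : ∀ j, Function.Surjective (L0 j))
    (hdim : ∀ V : Submodule ℝ (EuclideanSpace ℝ (Fin n)),
      (Module.finrank ℝ V : ℝ) ≤
        ∑ j, p j * (Module.finrank ℝ (V.map (L0 j).toLinearMap) : ℝ)) :
    ∃ δ > (0 : ℝ),
      ∀ L : ∀ j, EuclideanSpace ℝ (Fin n) →L[ℝ] EuclideanSpace ℝ (Fin (nj j)),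
        (∀ j, ‖L j - L0 j‖ < δ) →
        ∀ V : Submodule ℝ (EuclideanSpace ℝ (Fin n)),
          (Module.finrank ℝ V : ℝ) ≤
            ∑ j, p j * (Module.finrank ℝ (V.map (L j).toLinearMap) : ℝ) :=
  brascamp_lieb_dimension_condition_open_general n m nj p hp L0 hdim
end

section
/- Let H, H_1, ..., H_m be finite-dimensional Euclidean spaces, dim H = n, dim H_j = n_j, let L_j^0 : H → H_j be surjective linear maps and p_1, ..., p_m ∈ [0,1]. Assume the codimension condition: codim_H(V) ≥ Σ_j p_j · codim_{H_j}(L_j^0 V) for all subspaces V ⊆ H. Then there exist c > 0 and δ > 0 such that for every orthonormal basis e_1, ..., e_n of H and every tuple L = (L_j) with ‖L − L^0‖ ≤ δ, there exist sets I_j ⊆ {1, ..., n} with |I_j| = n_j for each j, satisfying Σ_j p_j · |I_j ∩ {1, ..., k}| ≤ k for all 1 ≤ k ≤ n, and |⋀_{i ∈ I_j} L_j e_i| ≥ c for all j. -/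
/-!
For a fixed basis `e`, select for each `j` the pivots of the family `L_j e_1, …, L_j e_n` read
from the back: the indices `i` with `L_j e_i ∉ span {L_j e_l | l > i}`. The selected vectors
form a basis of `H_j`, so their wedge product is nonzero, and the number of pivots `≤ k` is
`n_j - dim L_j V` for `V = span {e_l | l > k}`, a subspace of codimension `k + 1`; the codimension
condition for `V` is therefore exactly the partial-sum condition at `k`.

Uniformity comes from compactness: for `c > 0`, the set of `(e, L)` admitting a selection whose
wedge products all exceed `c` is open, and these sets increase to a cover of the compact set
`{orthonormal frames} × {L⁰}` as `c ↓ 0`. So a single `c` works on it, and by the Lebesgue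
number argument also on a `δ`-neighbourhood of it.
-/

open Module Submodule Finset

theorem Fin.filter_le_val_eq_union {n k : ℕ} (s : Finset (Fin n)) (hk : k < n) :
    {i ∈ s | k ≤ i.val} = {i ∈ s | k + 1 ≤ i.val} ∪ {i ∈ s | i = ⟨k, hk⟩} := by
  rw [← filter_or]
  refine filter_congr fun i _ => ?_
  simp only [Fin.ext_iff]
  omega

section Pivots

variable (K : Type*) {F : Type*} [Field K] [AddCommGroup F] [Module K F] {n : ℕ} (v : Fin n → F)

def tailSpan (k : ℕ) : Submodule K F :=
  span K (v '' {i | k ≤ i.val})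

open Classical in
noncomputable def pivots : Finset (Fin n) :=
  {i | v i ∉ tailSpan K v (i + 1)}

variable {K v}

theorem mem_pivots {i : Fin n} : i ∈ pivots K v ↔ v i ∉ tailSpan K v (i + 1) := by
  classical
  simp [pivots]

theorem tailSpan_zero : tailSpan K v 0 = span K (Set.range v) := by
  simp [tailSpan]

theorem tailSpan_eq_bot_of_le {k : ℕ} (hk : n ≤ k) : tailSpan K v k = ⊥ := by
  have : {i : Fin n | k ≤ i.val} = ∅ :=
    Set.eq_empty_of_forall_notMem fun i (hi : k ≤ i.val) => (hk.trans hi).not_gt i.isLt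
  simp [tailSpan, this]

theorem tailSpan_eq_sup {k : ℕ} (hk : k < n) :
    tailSpan K v k = tailSpan K v (k + 1) ⊔ K ∙ v ⟨k, hk⟩ := by
  have : {i : Fin n | k ≤ i.val} = insert ⟨k, hk⟩ {i : Fin n | k + 1 ≤ i.val} := by
    ext i
    simp only [Set.mem_ofPred_eq, Order.add_one_le_iff, Set.mem_insert_iff, Fin.ext_iff]
    omega
  rw [tailSpan, this, Set.image_insert_eq, span_insert, sup_comm, tailSpan]

theorem tailSpan_eq_of_notMem_pivots {k : ℕ} (hk : k < n) (h : ⟨k, hk⟩ ∉ pivots K v) :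
    tailSpan K v k = tailSpan K v (k + 1) := by
  rwa [mem_pivots, not_not, ← span_singleton_le_iff_mem, ← sup_eq_left, ← tailSpan_eq_sup hk] at h

theorem tailSpan_eq_span_pivots {k : ℕ} (hk : k ≤ n) :
    tailSpan K v k = span K (v '' ↑({i ∈ pivots K v | k ≤ i.val} : Finset (Fin n))) := by
  induction hk using Nat.decreasingInduction with
  | self =>
    rw [tailSpan_eq_bot_of_le le_rfl, eq_comm, span_eq_bot]
    rintro _ ⟨i, hi, rfl⟩
    have := i.isLt
    simp only [coe_filter, Set.mem_ofPred_eq] at hi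
    omega
  | of_succ k hk ih =>
    rw [Fin.filter_le_val_eq_union _ hk, coe_union, Set.image_union, span_union, ← ih]
    by_cases h : (⟨k, hk⟩ : Fin n) ∈ pivots K v
    · rw [filter_eq', if_pos h, coe_singleton, Set.image_singleton, tailSpan_eq_sup hk]
    · rw [filter_eq', if_neg h, coe_empty, Set.image_empty, span_empty, sup_bot_eq,
        tailSpan_eq_of_notMem_pivots hk h]

theorem span_image_pivots : span K (v '' pivots K v) = span K (Set.range v) := by
  rw [← tailSpan_zero, tailSpan_eq_span_pivots (Nat.zero_le n),
    filter_true_of_mem fun i _ => Nat.zero_le i.val]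

theorem LinearIndependent.pivots_eq_univ (hv : LinearIndependent K v) : pivots K v = univ :=
  eq_univ_of_forall fun i => mem_pivots.2 <| hv.notMem_span_image fun hi => by
    simp at hi

variable [FiniteDimensional K F]

theorem finrank_tailSpan {k : ℕ} (hk : k ≤ n) :
    finrank K (tailSpan K v k) = #{i ∈ pivots K v | k ≤ i.val} := by
  induction hk using Nat.decreasingInduction with
  | self =>
    rw [tailSpan_eq_bot_of_le le_rfl, finrank_bot, eq_comm, card_eq_zero, filter_eq_empty_iff]
    exact fun i _ => by have := i.isLt; omega
  | of_succ k hk ih =>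
    rw [Fin.filter_le_val_eq_union _ hk, card_union_of_disjoint, ← ih]
    · by_cases h : (⟨k, hk⟩ : Fin n) ∈ pivots K v
      · rw [filter_eq', if_pos h, card_singleton, tailSpan_eq_sup hk,
          finrank_sup_span_singleton (mem_pivots.1 h)]
      · rw [filter_eq', if_neg h, card_empty, add_zero, tailSpan_eq_of_notMem_pivots hk h]
    · exact disjoint_filter.2 fun i _ hi hik => by rw [hik] at hi; simp at hi

theorem card_pivots : #(pivots K v) = finrank K (span K (Set.range v)) := by
  rw [← tailSpan_zero, finrank_tailSpan (Nat.zero_le n),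
    filter_true_of_mem fun i _ => Nat.zero_le i.val]

theorem card_filter_pivots_le_add_finrank_tailSpan (k : Fin n) :
    #{i ∈ pivots K v | i ≤ k} + finrank K (tailSpan K v (k + 1)) = #(pivots K v) := by
  rw [finrank_tailSpan k.isLt, ← card_filter_add_card_filter_not (s := pivots K v) (· ≤ k)]
  congr 2
  refine filter_congr fun i _ => ?_
  simp only [Fin.le_def]
  omega

theorem LinearIndependent.finrank_tailSpan_add (hv : LinearIndependent K v) (k : Fin n) :
    finrank K (tailSpan K v (k + 1)) + (k + 1) = n := by
  have h := card_filter_pivots_le_add_finrank_tailSpan (K := K) (v := v) k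
  rw [hv.pivots_eq_univ, card_univ, Fintype.card_fin, filter_ge_eq_Iic, Fin.card_Iic] at h
  omega

end Pivots

theorem Module.Basis.det_ne_zero_of_span_eq_top {K M ι : Type*} [Field K] [AddCommGroup M]
    [Module K M] [Fintype ι] [DecidableEq ι] (b : Basis ι K M) {w : ι → M}
    (hw : span K (Set.range w) = ⊤) : b.det w ≠ 0 := by
  have hli : LinearIndependent K w :=
    linearIndependent_of_top_le_span_of_card_eq_finrank hw.ge (finrank_eq_card_basis b).symm
  exact ((b.is_basis_iff_det).1 ⟨hli, hw⟩).ne_zero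

section Selection

variable {K E G : Type*} [Field K] [AddCommGroup E] [Module K E] [AddCommGroup G] [Module K G]
  {n : ℕ} (b : Basis (Fin n) K E)

theorem map_tailSpan (v : Fin n → E) (f : E →ₗ[K] G) (k : ℕ) :
    (tailSpan K v k).map f = tailSpan K (f ∘ v) k := by
  rw [tailSpan, map_span, ← Set.image_comp, tailSpan]

theorem span_range_comp_basis_eq_top {f : E →ₗ[K] G} (hf : Function.Surjective f) :
    span K (Set.range (f ∘ b)) = ⊤ := by
  rw [Set.range_comp, ← map_span, b.span_eq, Submodule.map_top, LinearMap.range_eq_top.2 hf]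

variable [FiniteDimensional K G]

theorem card_pivots_comp_basis {f : E →ₗ[K] G} (hf : Function.Surjective f) :
    #(pivots K (f ∘ b)) = finrank K G := by
  rw [card_pivots, span_range_comp_basis_eq_top b hf, finrank_top]

theorem card_filter_pivots_comp_basis_add {f : E →ₗ[K] G} (hf : Function.Surjective f)
    (k : Fin n) :
    #{i ∈ pivots K (f ∘ b) | i ≤ k} + finrank K ((tailSpan K b (k + 1)).map f) =
      finrank K G := by
  rw [map_tailSpan, card_filter_pivots_le_add_finrank_tailSpan, card_pivots_comp_basis b hf]

end Selection

theorem sum_card_filter_pivots_le {K E : Type*} [Field K] [AddCommGroup E] [Module K E] {n : ℕ}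
    (b : Basis (Fin n) K E) {ι : Type*} [Fintype ι] {G : ι → Type*} [∀ j, AddCommGroup (G j)]
    [∀ j, Module K (G j)] [∀ j, FiniteDimensional K (G j)] (p : ι → ℝ)
    {f : ∀ j, E →ₗ[K] G j} (hf : ∀ j, Function.Surjective (f j))
    (hcodim : ∀ V : Submodule K E,
      ∑ j, p j * ((finrank K (G j) : ℝ) - finrank K (V.map (f j))) ≤ n - finrank K V)
    (k : Fin n) :
    ∑ j, p j * (#{i ∈ pivots K (f j ∘ b) | i ≤ k} : ℝ) ≤ k + 1 := by
  set V := tailSpan K b (k + 1)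
  have hcard (j : ι) : (#{i ∈ pivots K (f j ∘ b) | i ≤ k} : ℝ) =
      finrank K (G j) - finrank K (V.map (f j)) := by
    rw [← card_filter_pivots_comp_basis_add b (hf j) k]
    push_cast
    ring
  have : FiniteDimensional K E := .of_basis b
  have hV : (finrank K V : ℝ) + (k + 1) = n := by
    exact_mod_cast b.linearIndependent.finrank_tailSpan_add k
  calc ∑ j, p j * (#{i ∈ pivots K (f j ∘ b) | i ≤ k} : ℝ)
      = ∑ j, p j * ((finrank K (G j) : ℝ) - finrank K (V.map (f j))) := by simp_rw [hcard]
    _ ≤ n - finrank K V := hcodim V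
    _ = k + 1 := by linarith

/-- `⋀_{i ∈ I} v i ∈ ⋀ᵈ ℝᵈ ≅ ℝ`, the factors taken in increasing order of `i`. -/
noncomputable def wedgeDet {n d : ℕ} (v : Fin n → EuclideanSpace ℝ (Fin d)) (I : Finset (Fin n))
    (hI : #I = d) : ℝ :=
  Matrix.det (Matrix.of fun a b => v (I.orderIsoOfFin hI b) a)

theorem wedgeDet_ne_zero {n d : ℕ} {v : Fin n → EuclideanSpace ℝ (Fin d)} {I : Finset (Fin n)}
    (hI : #I = d) (hv : span ℝ (v '' I) = ⊤) : wedgeDet v I hI ≠ 0 := by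
  have hrange : Set.range (fun b => v (I.orderIsoOfFin hI b)) = v '' I := by
    simp_rw [coe_orderIsoOfFin_apply, Set.range_comp', range_orderEmbOfFin]
  have := (EuclideanSpace.basisFun (Fin d) ℝ).toBasis.det_ne_zero_of_span_eq_top
    (hrange ▸ hv)
  rwa [Basis.det_apply] at this

theorem Continuous.wedgeDet {X : Type*} [TopologicalSpace X] {n d : ℕ}
    {v : X → Fin n → EuclideanSpace ℝ (Fin d)} (hv : Continuous v) (I : Finset (Fin n))
    (hI : #I = d) : Continuous fun x => wedgeDet (v x) I hI := by
  unfold _root_.wedgeDet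
  fun_prop

theorem exists_basis_selection {E : Type*} [AddCommGroup E] [Module ℝ E] {n m : ℕ}
    (b : Basis (Fin n) ℝ E) {nj : Fin m → ℕ} (p : Fin m → ℝ)
    {L : ∀ j, E →ₗ[ℝ] EuclideanSpace ℝ (Fin (nj j))} (hL : ∀ j, Function.Surjective (L j))
    (hcodim : ∀ V : Submodule ℝ E,
      ∑ j, p j * ((nj j : ℝ) - finrank ℝ (V.map (L j))) ≤ n - finrank ℝ V) :
    ∃ I : Fin m → Finset (Fin n), ∃ hI : ∀ j, #(I j) = nj j,
      (∀ k : Fin n, ∑ j, p j * (#{i ∈ I j | i ≤ k} : ℝ) ≤ k + 1) ∧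
        ∀ j, wedgeDet (L j ∘ b) (I j) (hI j) ≠ 0 := by
  refine ⟨fun j => pivots ℝ (L j ∘ b),
    fun j => (card_pivots_comp_basis b (hL j)).trans (finrank_euclideanSpace_fin),
    sum_card_filter_pivots_le b p hL (by simpa only [finrank_euclideanSpace_fin] using hcodim),
    fun j => wedgeDet_ne_zero _ ?_⟩
  rw [span_image_pivots, span_range_comp_basis_eq_top b (hL j)]

theorem IsCompact.exists_uniform_pos_lower_bound {X ι κ : Type*} [PseudoMetricSpace X]
    [Finite κ] {K : Set X} (hK : IsCompact K) (g : ι → κ → X → ℝ)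
    (hg : ∀ a j, Continuous (g a j)) (hpos : ∀ x ∈ K, ∃ a, ∀ j, 0 < g a j x) :
    ∃ c > 0, ∃ δ > 0, ∀ x ∈ K, ∀ y, dist y x ≤ δ → ∃ a, ∀ j, c ≤ g a j y := by
  set U : ℕ → Set X := fun k => ⋃ a, ⋂ j, {y | 1 / ((k : ℝ) + 1) < g a j y}
  have hU_open (k : ℕ) : IsOpen (U k) :=
    isOpen_iUnion fun a => isOpen_iInter_of_finite fun j => isOpen_lt continuous_const (hg a j)
  have hU_mono : Monotone U := fun k l hkl =>
    Set.iUnion_mono fun a => Set.iInter_mono fun j => Set.ofPred_subset_ofPred.2 fun _ hy =>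
      (Nat.one_div_le_one_div hkl).trans_lt hy
  have hKU : K ⊆ ⋃ k, U k := fun x hx => by
    obtain ⟨a, ha⟩ := hpos x hx
    have : ∀ᶠ k : ℕ in Filter.atTop, ∀ j, 1 / ((k : ℝ) + 1) < g a j x :=
      Filter.eventually_all.2 fun j =>
        tendsto_one_div_add_atTop_nhds_zero_nat.eventually (gt_mem_nhds (ha j))
    obtain ⟨k, hk⟩ := this.exists
    exact Set.mem_iUnion.2 ⟨k, Set.mem_iUnion.2 ⟨a, Set.mem_iInter.2 hk⟩⟩
  obtain ⟨k, hk⟩ := hK.elim_directed_cover U hU_open hKU hU_mono.directed_le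
  obtain ⟨δ, hδ, hδU⟩ := hK.exists_thickening_subset_open (hU_open k) hk
  refine ⟨1 / ((k : ℝ) + 1), by positivity, δ / 2, by positivity, fun x hx y hy => ?_⟩
  obtain ⟨a, ha⟩ := Set.mem_iUnion.1 <|
    hδU (Metric.mem_thickening_iff.2 ⟨x, hx, by linarith⟩)
  exact ⟨a, fun j => (Set.mem_iInter.1 ha j).le⟩

theorem isCompact_setOf_orthonormal {𝕜 E ι : Type*} [RCLike 𝕜] [NormedAddCommGroup E]
    [InnerProductSpace 𝕜 E] [FiniteDimensional 𝕜 E] [Fintype ι] :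
    IsCompact {v : ι → E | Orthonormal 𝕜 v} := by
  classical
  have := FiniteDimensional.proper_rclike 𝕜 E
  refine Metric.isCompact_of_isClosed_isBounded ?_ ?_
  · simp only [orthonormal_iff_ite, Set.ofPred_forall]
    exact isClosed_iInter fun i => isClosed_iInter fun j =>
      isClosed_eq (by fun_prop) continuous_const
  · refine (Metric.isBounded_closedBall (x := 0) (r := 1)).subset fun v hv => ?_
    rw [Metric.mem_closedBall, dist_zero_right, pi_norm_le_iff_of_nonneg zero_le_one]
    exact fun i => (hv.1 i).le

theorem uniform_basis_selection_localised_general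
    (n m : ℕ) (nj : Fin m → ℕ) (p : Fin m → ℝ)
    (L0 : ∀ j, EuclideanSpace ℝ (Fin n) →L[ℝ] EuclideanSpace ℝ (Fin (nj j)))
    (hsurj : ∀ j, Function.Surjective (L0 j))
    (hcodim : ∀ V : Submodule ℝ (EuclideanSpace ℝ (Fin n)),
      ∑ j, p j * ((nj j : ℝ) - (Module.finrank ℝ (V.map (L0 j).toLinearMap) : ℝ)) ≤
        (n : ℝ) - (Module.finrank ℝ V : ℝ)) :
    ∃ c > (0 : ℝ), ∃ δ > (0 : ℝ),
      ∀ e : Fin n → EuclideanSpace ℝ (Fin n), Orthonormal ℝ e →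
      ∀ L : ∀ j, EuclideanSpace ℝ (Fin n) →L[ℝ] EuclideanSpace ℝ (Fin (nj j)),
        (∀ j, ‖L j - L0 j‖ ≤ δ) →
        ∃ I : ∀ _ : Fin m, Finset (Fin n), ∃ hI : ∀ j, (I j).card = nj j,
          (∀ k : Fin n,
            ∑ j, p j * ((((I j).filter fun i => i ≤ k).card : ℝ)) ≤ (k : ℕ) + 1) ∧
          (∀ j, c ≤ |Matrix.det (Matrix.of fun a b : Fin (nj j) =>
              (L j) (e ((I j).orderIsoOfFin (hI j) b : Fin n)) a)|) := by
  let Admissible := {I : Fin m → Finset (Fin n) // ∃ hI : ∀ j, #(I j) = nj j,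
    ∀ k : Fin n, ∑ j, p j * (#{i ∈ I j | i ≤ k} : ℝ) ≤ k + 1}
  let g (I : Admissible) (j : Fin m)
      (x : (Fin n → EuclideanSpace ℝ (Fin n)) × ∀ j, EuclideanSpace ℝ (Fin n) →L[ℝ]
        EuclideanSpace ℝ (Fin (nj j))) : ℝ :=
    |wedgeDet (fun i => x.2 j (x.1 i)) (I.1 j) (I.2.1 j)|
  let K := {e : Fin n → EuclideanSpace ℝ (Fin n) | Orthonormal ℝ e} ×ˢ {L0}
  have hK : IsCompact K := isCompact_setOf_orthonormal.prod isCompact_singleton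
  have hpos : ∀ x ∈ K, ∃ I, ∀ j, 0 < g I j x := by
    rintro ⟨e, L⟩ ⟨he, hL : L = L0⟩
    subst L
    let b := basisOfLinearIndependentOfCardEqFinrank' e he.linearIndependent (by simp)
    obtain ⟨I, hI, hsum, hdet⟩ := exists_basis_selection b p
      (L := fun j => (L0 j).toLinearMap) hsurj hcodim
    rw [show ⇑b = e from Basis.coe_mk _ _] at hdet
    exact ⟨⟨I, hI, hsum⟩, fun j => abs_pos.2 (hdet j)⟩
  obtain ⟨c, hc, δ, hδ, hbound⟩ := hK.exists_uniform_pos_lower_bound g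
    (fun I j => (Continuous.wedgeDet (by fun_prop) _ _).abs) hpos
  refine ⟨c, hc, δ, hδ, fun e he L hL => ?_⟩
  have hdist : dist (e, L) (e, L0) ≤ δ := by
    rw [Prod.dist_eq, dist_self, max_eq_right dist_nonneg, dist_pi_le_iff hδ.le]
    simpa only [dist_eq_norm] using hL
  obtain ⟨⟨I, hI, hsum⟩, hI_bound⟩ := hbound (e, L0) ⟨he, rfl⟩ (e, L) hdist
  exact ⟨I, hI, hsum, hI_bound⟩

/-- Uniform basis selection lemma (Lemma 2.2): under the codimension condition for
`L⁰`, there are `c, δ > 0` such that for every orthonormal basis `e` of `H` and every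
`L` with `‖L - L⁰‖ ≤ δ`, one can select index sets `I_j` of size `n_j` satisfying the
partial-sum condition and a uniform lower bound on the wedge products
`|⋀_{i ∈ I_j} L_j e_i|` (identified with real numbers via determinants). -/
theorem uniform_basis_selection_localised
    (n m : ℕ) (nj : Fin m → ℕ) (p : Fin m → ℝ)
    (hp : ∀ j, p j ∈ Set.Icc (0 : ℝ) 1)
    (L0 : ∀ j, EuclideanSpace ℝ (Fin n) →L[ℝ] EuclideanSpace ℝ (Fin (nj j)))
    (hsurj : ∀ j, Function.Surjective (L0 j))
    (hcodim : ∀ V : Submodule ℝ (EuclideanSpace ℝ (Fin n)),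
      ∑ j, p j * ((nj j : ℝ) - (Module.finrank ℝ (V.map (L0 j).toLinearMap) : ℝ)) ≤
        (n : ℝ) - (Module.finrank ℝ V : ℝ)) :
    ∃ c > (0 : ℝ), ∃ δ > (0 : ℝ),
      ∀ e : Fin n → EuclideanSpace ℝ (Fin n), Orthonormal ℝ e →
      ∀ L : ∀ j, EuclideanSpace ℝ (Fin n) →L[ℝ] EuclideanSpace ℝ (Fin (nj j)),
        (∀ j, ‖L j - L0 j‖ ≤ δ) →
        ∃ I : ∀ _ : Fin m, Finset (Fin n), ∃ hI : ∀ j, (I j).card = nj j,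
          (∀ k : Fin n,
            ∑ j, p j * ((((I j).filter fun i => i ≤ k).card : ℝ)) ≤ (k : ℕ) + 1) ∧
          (∀ j, c ≤ |Matrix.det (Matrix.of fun a b : Fin (nj j) =>
              (L j) (e ((I j).orderIsoOfFin (hI j) b : Fin n)) a)|) :=
  uniform_basis_selection_localised_general n m nj p L0 hsurj hcodim
end

section
/- Let H be an n-dimensional Euclidean space and L_j : H → H_j surjective linear maps with Σ_j p_j · codim(L_j V) ≤ codim(V) for all subspaces V (codimension condition). Fix an orthonormal basis e_1, ..., e_n of H. Then for each j there exists a set I_j ⊆ {1, ..., n} with |I_j| = dim H_j, ⋀_{i ∈ I_j} L_j e_i ≠ 0, and such that for V_k = span{e_{k+1}, ..., e_n} one has dim(L_j V_k) = |I_j ∩ {k+1, ..., n}| for all 0 ≤ k ≤ n; consequently Σ_j p_j · |I_j ∩ {1, ..., k}| ≤ k for all 1 ≤ k ≤ n. -/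
open Module Finset

private lemma iotaMulti_basis_ne_zero {K M : Type*} [Field K] [AddCommGroup M] [Module K M] {N : ℕ}
    (b : Basis (Fin N) K M) : ExteriorAlgebra.ιMulti K N ⇑b ≠ 0 := by
  intro h
  classical
  set f : ∀ i : ℕ, M [⋀^Fin i]→ₗ[K] K :=
    Function.update (fun i => (0 : M [⋀^Fin i]→ₗ[K] K)) N b.det with hf
  have h2 := congrArg (fun x => ExteriorAlgebra.liftAlternating f x) h
  simp only [ExteriorAlgebra.liftAlternating_apply_ιMulti, map_zero] at h2
  rw [hf, Function.update_self] at h2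
  simp [Basis.det_self] at h2

private lemma card_filter_le_aux (n k : ℕ) (hk : k ≤ n) :
    (Finset.univ.filter fun i : Fin n => k ≤ (i : ℕ)).card = n - k := by
  have himg : (Finset.univ.filter fun i : Fin n => k ≤ (i : ℕ)).image (Fin.val) =
      Finset.Ico k n := by
    ext a
    simp only [Finset.mem_image, Finset.mem_filter, Finset.mem_univ, true_and, Finset.mem_Ico]
    constructor
    · rintro ⟨i, hi, rfl⟩; exact ⟨hi, i.isLt⟩
    · rintro ⟨h1, h2⟩; exact ⟨⟨a, h2⟩, h1, rfl⟩
  have := Finset.card_image_of_injective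
    (Finset.univ.filter fun i : Fin n => k ≤ (i : ℕ)) Fin.val_injective
  rw [himg, Nat.card_Ico] at this
  omega

/-- Backwards greedy selection: under the codimension condition, for any orthonormal
basis `e` of `H` one can choose, for each `j`, a set `I_j` of size `dim H_j` with
`⋀_{i ∈ I_j} L_j e_i ≠ 0`, computing the dimensions `dim (L_j V_k)` for the tail spans
`V_k = span{e_{k+1}, ..., e_n}`, and hence satisfying the partial-sum condition. -/
theorem backwards_greedy_selection
    (n m : ℕ) (nj : Fin m → ℕ) (p : Fin m → ℝ)
    (hp : ∀ j, p j ∈ Set.Icc (0 : ℝ) 1)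
    (L : ∀ j, EuclideanSpace ℝ (Fin n) →ₗ[ℝ] EuclideanSpace ℝ (Fin (nj j)))
    (hsurj : ∀ j, Function.Surjective (L j))
    (hcodim : ∀ V : Submodule ℝ (EuclideanSpace ℝ (Fin n)),
      ∑ j, p j * ((nj j : ℝ) - (Module.finrank ℝ (V.map (L j)) : ℝ)) ≤
        (n : ℝ) - (Module.finrank ℝ V : ℝ))
    (e : Fin n → EuclideanSpace ℝ (Fin n)) (he : Orthonormal ℝ e) :
    ∃ I : ∀ _ : Fin m, Finset (Fin n), ∃ hI : ∀ j, (I j).card = nj j,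
      (∀ j, ExteriorAlgebra.ιMulti ℝ (nj j)
          (fun a : Fin (nj j) => (L j) (e ((I j).orderIsoOfFin (hI j) a : Fin n))) ≠ 0) ∧
      (∀ j, ∀ k : ℕ, k ≤ n →
        Module.finrank ℝ
            ((Submodule.span ℝ (e '' {i : Fin n | k ≤ (i : ℕ)})).map (L j)) =
          ((I j).filter fun i : Fin n => k ≤ (i : ℕ)).card) ∧
      (∀ k : ℕ, 1 ≤ k → k ≤ n →
        ∑ j, p j * ((((I j).filter fun i : Fin n => (i : ℕ) < k).card : ℝ)) ≤ (k : ℝ)) := by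
  classical
  have hli : LinearIndependent ℝ e := he.linearIndependent
  set V : ℕ → Submodule ℝ (EuclideanSpace ℝ (Fin n)) := fun k => Submodule.span ℝ (e '' {i : Fin n | k ≤ (i : ℕ)})
    with hVdef
  -- V n = ⊥
  have hVn : V n = ⊥ := by
    have : {i : Fin n | n ≤ (i : ℕ)} = ∅ := by
      ext i; simp [Nat.not_le.mpr i.isLt]
    simp [hVdef, this]
  -- finrank of V k
  have hVrank : ∀ k, k ≤ n → finrank ℝ (V k) = n - k := by
    intro k hk
    have hinj : LinearIndependent ℝ (fun i : {i : Fin n // k ≤ (i : ℕ)} => e i) := by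
      have := hli.comp (Subtype.val : {i : Fin n // k ≤ (i : ℕ)} → Fin n) Subtype.val_injective
      exact this
    have hr : Set.range (fun i : {i : Fin n // k ≤ (i : ℕ)} => e i)
        = e '' {i : Fin n | k ≤ (i : ℕ)} := by
      ext x
      simp [Set.mem_image, Set.range]
    have h1 := finrank_span_eq_card hinj
    rw [hr] at h1
    rw [hVdef]
    simp only
    rw [h1, Fintype.card_subtype, card_filter_le_aux n k hk]
  -- V 0 = ⊤
  have hV0 : V 0 = ⊤ := by
    have h0 : finrank ℝ (V 0) = n := by rw [hVrank 0 (Nat.zero_le n)]; omega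
    apply Submodule.eq_top_of_finrank_eq
    rw [h0, finrank_euclideanSpace_fin]
  -- V k step
  have hVstep : ∀ k, (hk : k < n) → V k = Submodule.span ℝ {e ⟨k, hk⟩} ⊔ V (k + 1) := by
    intro k hk
    have hset : {i : Fin n | k ≤ (i : ℕ)} =
        insert (⟨k, hk⟩ : Fin n) {i : Fin n | k + 1 ≤ (i : ℕ)} := by
      ext i
      simp only [Set.mem_setOf_eq, Set.mem_insert_iff, Fin.ext_iff]
      omega
    rw [hVdef]
    simp only [hset, Set.image_insert_eq]
    rw [Submodule.span_insert]
  -- antitone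
  have hVanti : ∀ k k' : ℕ, k ≤ k' → V k' ≤ V k := by
    intro k k' hkk
    apply Submodule.span_mono
    apply Set.image_mono
    intro i hi
    exact le_trans hkk hi
  -- dimensions
  set d : Fin m → ℕ → ℕ := fun j k => finrank ℝ ((V k).map (L j)) with hddef
  have hdn : ∀ j, d j n = 0 := by
    intro j
    show finrank ℝ ((V n).map (L j)) = 0
    rw [hVn, Submodule.map_bot, finrank_bot]
  have hd0 : ∀ j, d j 0 = nj j := by
    intro j
    show finrank ℝ ((V 0).map (L j)) = nj j
    rw [hV0, Submodule.map_top, LinearMap.range_eq_top.2 (hsurj j)]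
    simp [finrank_euclideanSpace_fin]
  have hdmono : ∀ j, ∀ k k' : ℕ, k ≤ k' → d j k' ≤ d j k := by
    intro j k k' hkk
    exact Submodule.finrank_mono (Submodule.map_mono (hVanti k k' hkk))
  have hmapstep : ∀ j, ∀ k, (hk : k < n) →
      (V k).map (L j) = Submodule.span ℝ {L j (e ⟨k, hk⟩)} ⊔ (V (k + 1)).map (L j) := by
    intro j k hk
    rw [hVstep k hk, Submodule.map_sup, Submodule.map_span, Set.image_singleton]
  have hdstep : ∀ j, ∀ k, k < n → d j k ≤ d j (k + 1) + 1 := by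
    intro j k hk
    show finrank ℝ ((V k).map (L j)) ≤ finrank ℝ ((V (k+1)).map (L j)) + 1
    rw [hmapstep j k hk]
    refine le_trans (Submodule.finrank_add_le_finrank_add_finrank _ _) ?_
    have h1 : finrank ℝ (Submodule.span ℝ {L j (e ⟨k, hk⟩)}) ≤ 1 := by
      simpa using finrank_span_le_card ({L j (e ⟨k, hk⟩)} : Set (EuclideanSpace ℝ (Fin (nj j))))
    omega
  -- the greedy sets
  set I : Fin m → Finset (Fin n) :=
    fun j => Finset.univ.filter fun i : Fin n => d j ((i : ℕ) + 1) < d j (i : ℕ) with hIdef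
  -- membership characterization
  have hmem : ∀ j, ∀ i : Fin n, i ∈ I j ↔ d j ((i : ℕ) + 1) < d j (i : ℕ) := by
    intro j i; simp [hIdef]
  -- counting lemma
  have hcount : ∀ j, ∀ k, k ≤ n →
      ((I j).filter fun i : Fin n => k ≤ (i : ℕ)).card = d j k := by
    intro j
    have key : ∀ t, t ≤ n →
        ((I j).filter fun i : Fin n => n - t ≤ (i : ℕ)).card = d j (n - t) := by
      intro t
      induction t with
      | zero =>
        intro _
        simp only [Nat.sub_zero]
        rw [hdn j]
        rw [Finset.card_eq_zero, Finset.filter_eq_empty_iff]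
        intro i _
        exact Nat.not_le.mpr i.isLt
      | succ t ih =>
        intro ht
        have hkn : n - (t + 1) < n := by omega
        set k := n - (t + 1) with hkdef
        have hk1 : k + 1 = n - t := by omega
        have hsplit : ((I j).filter fun i : Fin n => k ≤ (i : ℕ)) =
            ((I j).filter fun i : Fin n => k + 1 ≤ (i : ℕ)) ∪
              ((I j).filter fun i : Fin n => i = (⟨k, hkn⟩ : Fin n)) := by
          rw [← Finset.filter_or]
          apply Finset.filter_congr
          intro i _
          simp only [Fin.ext_iff]
          omega
        have hdisj : Disjoint ((I j).filter fun i : Fin n => k + 1 ≤ (i : ℕ))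
            ((I j).filter fun i : Fin n => i = (⟨k, hkn⟩ : Fin n)) := by
          refine Finset.disjoint_left.2 ?_
          intro i hi1 hi2
          rw [Finset.mem_filter] at hi1 hi2
          rw [hi2.2] at hi1
          simp at hi1
        rw [hsplit, Finset.card_union_of_disjoint hdisj]
        rw [Finset.filter_eq' (I j) (⟨k, hkn⟩ : Fin n)]
        have ihr := ih (by omega)
        rw [← hk1] at ihr
        by_cases hmemk : (⟨k, hkn⟩ : Fin n) ∈ I j
        · have hd : d j k = d j (k + 1) + 1 := by
            have h1 := (hmem j ⟨k, hkn⟩).1 hmemk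
            have h2 := hdstep j k hkn
            simp only [Fin.val_mk] at h1 ⊢
            omega
          rw [if_pos hmemk, Finset.card_singleton, ihr, hd]
        · have hd : d j k = d j (k + 1) := by
            have h1 : ¬ d j (k + 1) < d j k := fun h => hmemk ((hmem j ⟨k, hkn⟩).2 h)
            have h2 := hdmono j k (k + 1) (Nat.le_succ k)
            omega
          rw [if_neg hmemk, Finset.card_empty, ihr, hd, Nat.add_zero]
    intro k hk
    have := key (n - k) (by omega)
    rwa [Nat.sub_sub_self hk] at this
  -- cardinality
  have hIcard : ∀ j, (I j).card = nj j := by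
    intro j
    have := hcount j 0 (Nat.zero_le n)
    rw [hd0 j] at this
    simpa using this
  -- span lemma
  have hspan : ∀ j, Submodule.span ℝ ((fun i => L j (e i)) '' (I j : Set (Fin n))) = ⊤ := by
    intro j
    have key : ∀ t, t ≤ n →
        Submodule.span ℝ ((fun i => L j (e i)) ''
            {i : Fin n | i ∈ I j ∧ n - t ≤ (i : ℕ)}) = (V (n - t)).map (L j) := by
      intro t
      induction t with
      | zero =>
        intro _
        have hempty : {i : Fin n | i ∈ I j ∧ n - 0 ≤ (i : ℕ)} = ∅ := by
          ext i
          simp only [Set.mem_setOf_eq, Set.mem_empty_iff_false, iff_false, not_and]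
          intro _
          exact Nat.not_le.mpr (by simpa using i.isLt)
        rw [hempty]
        simp [hVn]
      | succ t ih =>
        intro ht
        have hkn : n - (t + 1) < n := by omega
        set k := n - (t + 1) with hkdef
        have hk1 : k + 1 = n - t := by omega
        have ihr : Submodule.span ℝ ((fun i => L j (e i)) ''
            {i : Fin n | i ∈ I j ∧ k + 1 ≤ (i : ℕ)}) = (V (k + 1)).map (L j) := by
          rw [hk1]; exact ih (by omega)
        by_cases hmemk : (⟨k, hkn⟩ : Fin n) ∈ I j
        · have hset : {i : Fin n | i ∈ I j ∧ k ≤ (i : ℕ)} =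
              insert (⟨k, hkn⟩ : Fin n) {i : Fin n | i ∈ I j ∧ k + 1 ≤ (i : ℕ)} := by
            ext i
            simp only [Set.mem_setOf_eq, Set.mem_insert_iff, Fin.ext_iff]
            constructor
            · rintro ⟨h1, h2⟩
              rcases Nat.eq_or_lt_of_le h2 with h | h
              · left; omega
              · right; exact ⟨h1, h⟩
            · rintro (h | ⟨h1, h2⟩)
              · have : i = (⟨k, hkn⟩ : Fin n) := Fin.ext h
                subst this
                exact ⟨hmemk, le_refl _⟩
              · exact ⟨h1, by omega⟩
          rw [hset, Set.image_insert_eq, Submodule.span_insert, ihr,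
            hmapstep j k hkn]
        · have hset : {i : Fin n | i ∈ I j ∧ k ≤ (i : ℕ)} =
              {i : Fin n | i ∈ I j ∧ k + 1 ≤ (i : ℕ)} := by
            ext i
            simp only [Set.mem_setOf_eq]
            constructor
            · rintro ⟨h1, h2⟩
              refine ⟨h1, ?_⟩
              rcases Nat.eq_or_lt_of_le h2 with h | h
              · exfalso; apply hmemk
                have : i = (⟨k, hkn⟩ : Fin n) := Fin.ext h.symm
                rwa [this] at h1
              · omega
            · rintro ⟨h1, h2⟩; exact ⟨h1, by omega⟩
          rw [hset, ihr]
          -- map V (k+1) = map V k since dims equal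
          have hd : d j k = d j (k + 1) := by
            have h1 : ¬ d j (k + 1) < d j k := fun h => hmemk ((hmem j ⟨k, hkn⟩).2 h)
            have h2 := hdmono j k (k + 1) (Nat.le_succ k)
            omega
          refine Submodule.eq_of_le_of_finrank_eq
            (Submodule.map_mono (hVanti k (k + 1) (Nat.le_succ k))) ?_
          exact hd.symm
    have := key n (le_refl n)
    simp only [Nat.sub_self] at this
    rw [hV0, Submodule.map_top, LinearMap.range_eq_top.2 (hsurj j)] at this
    have hseteq : {i : Fin n | i ∈ I j ∧ 0 ≤ (i : ℕ)} = (I j : Set (Fin n)) := by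
      ext i; simp
    rwa [hseteq] at this
  refine ⟨I, hIcard, ?_, ?_, ?_⟩
  · -- wedge nonzero
    intro j
    set v : Fin (nj j) → EuclideanSpace ℝ (Fin (nj j)) :=
      fun a => L j (e ((I j).orderIsoOfFin (hIcard j) a : Fin n)) with hvdef
    have hrange : Set.range v = (fun i => L j (e i)) '' (I j : Set (Fin n)) := by
      ext x
      simp only [hvdef, Set.mem_range, Set.mem_image, Finset.mem_coe]
      constructor
      · rintro ⟨a, rfl⟩
        exact ⟨_, ((I j).orderIsoOfFin (hIcard j) a).2, rfl⟩
      · rintro ⟨i, hi, rfl⟩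
        exact ⟨((I j).orderIsoOfFin (hIcard j)).symm ⟨i, hi⟩, by
          simp⟩
    have htop : ⊤ ≤ Submodule.span ℝ (Set.range v) := by
      rw [hrange, hspan j]
    have hcard : Fintype.card (Fin (nj j)) = finrank ℝ (EuclideanSpace ℝ (Fin (nj j))) := by
      simp [finrank_euclideanSpace_fin]
    have hb := coe_basisOfTopLeSpanOfCardEqFinrank v htop hcard
    have hne := iotaMulti_basis_ne_zero (basisOfTopLeSpanOfCardEqFinrank v htop hcard)
    rw [hb] at hne
    exact hne
  · -- dimension formula
    intro j k hk
    have h := (hcount j k hk).symm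
    exact h
  · -- partial sums
    intro k hk1 hkn
    have hbound : ∀ j, (((I j).filter fun i : Fin n => (i : ℕ) < k).card : ℝ)
        = (nj j : ℝ) - (d j k : ℝ) := by
      intro j
      have hcompl : ((I j).filter fun i : Fin n => (i : ℕ) < k).card +
          ((I j).filter fun i : Fin n => k ≤ (i : ℕ)).card = (I j).card := by
        have h0 := Finset.card_filter_add_card_filter_not
          (s := I j) (p := fun i : Fin n => (i : ℕ) < k)
        have heq : ((I j).filter fun i : Fin n => ¬ (i : ℕ) < k) =
            ((I j).filter fun i : Fin n => k ≤ (i : ℕ)) := by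
          apply Finset.filter_congr
          intro i _
          simp [Nat.not_lt]
        rw [heq] at h0
        exact h0
      have h1 := hcount j k hkn
      have h2 := hIcard j
      have hdle : d j k ≤ nj j := by
        have := hdmono j 0 k (Nat.zero_le k)
        rw [hd0 j] at this
        exact this
      have : ((I j).filter fun i : Fin n => (i : ℕ) < k).card = nj j - d j k := by omega
      rw [this]
      push_cast [Nat.cast_sub hdle]
      ring
    calc ∑ j, p j * (((I j).filter fun i : Fin n => (i : ℕ) < k).card : ℝ)
        = ∑ j, p j * ((nj j : ℝ) - (d j k : ℝ)) := by
          apply Finset.sum_congr rfl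
          intro j _
          rw [hbound j]
      _ ≤ (n : ℝ) - (finrank ℝ (V k) : ℝ) := hcodim (V k)
      _ = (k : ℝ) := by
          rw [hVrank k hkn]
          have : ((n - k : ℕ) : ℝ) = (n : ℝ) - (k : ℝ) := by
            push_cast [Nat.cast_sub hkn]
            ring
          rw [this]
          ring
end

section
/- Let A : H → H be a positive semi-definite self-adjoint linear map on a Euclidean space H, and let v_1, ..., v_d be vectors in a d-dimensional subspace (or H_j of dimension d) with |⋀_{i=1}^d v_i| ≥ c > 0. Then det(A) ≤ c^{-2} · ∏_{i=1}^d ⟨A v_i, v_i⟩. -/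
/-!
Write `A` in the standard basis as a matrix `M` and let `V` be the matrix with columns `v i`.
The Gram matrix `G = Vᵀ M V` of the form `⟪A ·, ·⟫` on the `v i` is positive semidefinite, has
diagonal entries `⟪A (v i), v i⟫` and determinant `det A * (det V)²`, so the claim is Hadamard's
inequality `det G ≤ ∏ i, G i i`. Writing `G = Bᵀ B` with `B = √G`, this is the square of the
column form `|det B| ≤ ∏ j, ‖B e_j‖`, i.e. the volume-form bound in an orthonormal basis.
-/

open Matrix
open scoped RealInnerProductSpace MatrixOrder

theorem OrthonormalBasis.abs_det_le_prod_norm {E ι : Type*} [NormedAddCommGroup E]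
    [InnerProductSpace ℝ E] [Fintype ι] [DecidableEq ι] (b : OrthonormalBasis ι ℝ E)
    (v : ι → E) : |b.toBasis.det v| ≤ ∏ i, ‖v i‖ := by
  let e := Fintype.equivFin ι
  have : Fact (Module.finrank ℝ E = Fintype.card ι) := ⟨Module.finrank_eq_card_basis b.toBasis⟩
  have h := (b.reindex e).toBasis.orientation.abs_volumeForm_apply_le (v ∘ e.symm)
  rwa [(b.reindex e).toBasis.orientation.volumeForm_robust' (b.reindex e), b.reindex_toBasis,
    Module.Basis.det_reindex, Function.comp_assoc, e.symm_comp_self, Function.comp_id,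
    Function.comp_def, e.symm.prod_comp (fun i => ‖v i‖)] at h

namespace Matrix

variable {n : Type*} [Fintype n] [DecidableEq n]

theorem abs_det_le_prod_norm_col (B : Matrix n n ℝ) :
    |B.det| ≤ ∏ j, ‖WithLp.toLp 2 (Bᵀ j)‖ := by
  have h := (EuclideanSpace.basisFun n ℝ).abs_det_le_prod_norm (fun j => WithLp.toLp 2 (Bᵀ j))
  rwa [Module.Basis.det_apply] at h

theorem det_transpose_mul_self_le_prod_diag (B : Matrix n n ℝ) :
    (Bᵀ * B).det ≤ ∏ i, (Bᵀ * B) i i := by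
  have hdiag : ∀ i, (Bᵀ * B) i i = ‖WithLp.toLp 2 (Bᵀ i)‖ ^ 2 := by
    intro i
    rw [EuclideanSpace.norm_sq_eq]
    simp [mul_apply, sq]
  calc (Bᵀ * B).det = |B.det| ^ 2 := by rw [det_mul, det_transpose, sq_abs, sq]
    _ ≤ (∏ j, ‖WithLp.toLp 2 (Bᵀ j)‖) ^ 2 := by gcongr; exact B.abs_det_le_prod_norm_col
    _ = ∏ i, (Bᵀ * B) i i := by rw [← Finset.prod_pow]; simp only [hdiag]

theorem PosSemidef.det_le_prod_diag {G : Matrix n n ℝ} (hG : G.PosSemidef) :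
    G.det ≤ ∏ i, G i i := by
  obtain ⟨B, rfl⟩ : ∃ B : Matrix n n ℝ, G = Bᵀ * B := by
    refine ⟨CFC.sqrt G, ?_⟩
    rw [← conjTranspose_eq_transpose_of_trivial, (CFC.sqrt_nonneg G).posSemidef.isHermitian.eq,
      CFC.sqrt_mul_sqrt_self G hG.nonneg]
  exact B.det_transpose_mul_self_le_prod_diag

end Matrix

/-- Determinant of a positive semi-definite map bounded by the product of its
"diagonal entries" in a (possibly non-orthonormal) basis `v₁, ..., v_d`, with
`|⋀ v_i| ≥ c` entering as the factor `c⁻²`. -/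
theorem det_le_prod_inner_of_wedge_lower_bound
    (d : ℕ) (A : EuclideanSpace ℝ (Fin d) →ₗ[ℝ] EuclideanSpace ℝ (Fin d))
    (hsym : A.IsSymmetric) (hpos : ∀ x, 0 ≤ ⟪A x, x⟫)
    (v : Fin d → EuclideanSpace ℝ (Fin d)) (c : ℝ) (hc : 0 < c)
    (hv : c ≤ |Matrix.det (Matrix.of fun i j : Fin d => v j i)|) :
    LinearMap.det A ≤ c⁻¹ ^ 2 * ∏ i, ⟪A (v i), v i⟫ := by
  set b := EuclideanSpace.basisFun (Fin d) ℝ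
  set M := LinearMap.toMatrix b.toBasis b.toBasis A
  set V : Matrix (Fin d) (Fin d) ℝ := Matrix.of fun i j => v j i
  have hM : M.PosSemidef := (LinearMap.posSemidef_toMatrix_iff b).2 ⟨hsym, hpos⟩
  have hG : (Vᵀ * M * V).PosSemidef := by
    simpa [conjTranspose_eq_transpose_of_trivial] using hM.conjTranspose_mul_mul_same V
  have hdet : (Vᵀ * M * V).det = V.det ^ 2 * LinearMap.det A := by
    rw [det_mul, det_mul, det_transpose, LinearMap.det_toMatrix]; ring
  have hdiag : ∀ i, (Vᵀ * M * V) i i = ⟪A (v i), v i⟫ := by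
    intro i
    have hAv : M *ᵥ (v i).ofLp = (A (v i)).ofLp :=
      LinearMap.toMatrix_mulVec_repr b.toBasis b.toBasis A (v i)
    have hVi : Vᵀ i = (v i).ofLp := rfl
    rw [mul_mul_apply, hVi, hAv, EuclideanSpace.inner_eq_star_dotProduct, star_trivial]
  have hc2 : c ^ 2 ≤ V.det ^ 2 := by simpa only [sq_abs] using pow_le_pow_left₀ hc.le hv 2
  rw [inv_pow, le_inv_mul_iff₀ (by positivity)]
  calc c ^ 2 * LinearMap.det A ≤ V.det ^ 2 * LinearMap.det A := by
        gcongr; exact LinearMap.det_toMatrix b.toBasis A ▸ hM.det_nonneg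
    _ = (Vᵀ * M * V).det := hdet.symm
    _ ≤ ∏ i, (Vᵀ * M * V) i i := hG.det_le_prod_diag
    _ = ∏ i, ⟪A (v i), v i⟫ := by simp only [hdiag]
end

section
/- Let μ_ℓ ≥ μ_{ℓ+1} ≥ ... ≥ μ_n > 0 be real numbers and a_ℓ, ..., a_n ≥ 0 such that Σ_{i=k+1}^n a_i ≥ n − k for all ℓ−1 ≤ k ≤ n−1 and μ_ℓ ≤ 1. Then ∏_{i=ℓ}^n μ_i^{a_i} ≤ ∏_{i=ℓ}^n μ_i. -/
open Finset

lemma key_tail_sum (N : ℕ) : ∀ (x a : ℕ → ℝ),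
    (∀ i j : ℕ, i ≤ j → x i ≤ x j) → 0 ≤ x 0 → (∀ i, 0 ≤ a i) →
    (∀ k : ℕ, k ≤ N → ((N : ℝ) - k) ≤ ∑ i ∈ Finset.Ico k N, a i) →
    ∑ i ∈ Finset.range N, x i ≤ ∑ i ∈ Finset.range N, a i * x i := by
  induction N with
  | zero => simp
  | succ N ih =>
    intro x a hx hx0 ha hsum
    have h' : ∑ i ∈ Finset.range N, (x (i+1) - x 0)
        ≤ ∑ i ∈ Finset.range N, a (i+1) * (x (i+1) - x 0) := by
      apply ih (fun i => x (i+1) - x 0) (fun i => a (i+1))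
      · intro i j hij; exact sub_le_sub_right (hx _ _ (by omega)) _
      · exact sub_nonneg.2 (hx 0 1 (by omega))
      · intro i; exact ha _
      · intro k hk
        have h1 := hsum (k+1) (by omega)
        have e : ∑ i ∈ Finset.Ico (k+1) (N+1), a i
            = ∑ i ∈ Finset.Ico k N, (fun i => a (i+1)) i := by
          rw [Finset.sum_Ico_eq_sum_range, Finset.sum_Ico_eq_sum_range]
          simp only [Nat.succ_sub_succ]
          exact Finset.sum_congr rfl (fun i _ => by show a _ = a _; congr 1; omega)
        rw [← e]
        push_cast at h1 ⊢
        linarith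
    have e1 : ∑ i ∈ Finset.range (N+1), a i * (x i - x 0)
        = ∑ i ∈ Finset.range N, a (i+1) * (x (i+1) - x 0) := by
      rw [Finset.sum_range_succ']; simp
    have e2 : ∑ i ∈ Finset.range N, (x (i+1) - x 0)
        = (∑ i ∈ Finset.range (N+1), x i) - x 0 - N * x 0 := by
      rw [Finset.sum_sub_distrib, Finset.sum_range_succ' x]
      simp [Finset.sum_const, nsmul_eq_mul]
    have e3 : ∑ i ∈ Finset.range (N+1), a i * x i
        = (∑ i ∈ Finset.range (N+1), a i * (x i - x 0))
          + x 0 * ∑ i ∈ Finset.range (N+1), a i := by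
      rw [Finset.mul_sum, ← Finset.sum_add_distrib]
      exact Finset.sum_congr rfl (fun i _ => by ring)
    have h4 : ((N:ℝ) + 1) ≤ ∑ i ∈ Finset.range (N+1), a i := by
      have := hsum 0 (by omega)
      rw [Finset.range_eq_Ico]
      push_cast at this ⊢
      linarith
    have h5 : x 0 * ((N:ℝ)+1) ≤ x 0 * ∑ i ∈ Finset.range (N+1), a i :=
      mul_le_mul_of_nonneg_left h4 hx0
    rw [e3, e1]
    linarith [h', e2]

/-- Reverse telescoping inequality (partially localised case): with
`μ_ℓ ≥ ... ≥ μ_n > 0`, `μ_ℓ ≤ 1`, `a_i ≥ 0` and tail sums `Σ_{i > k} a_i ≥ n - k`,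
one has `Π μ_i ^ a_i ≤ Π μ_i`.  (The indices `ℓ, ..., n` are reindexed by `Fin N`.) -/
theorem prod_rpow_le_prod_of_tail_sums
    (N : ℕ) (μ a : Fin N → ℝ)
    (hmono : ∀ i j : Fin N, i ≤ j → μ j ≤ μ i)
    (hμ : ∀ i, 0 < μ i)
    (hfirst : ∀ h0 : 0 < N, μ ⟨0, h0⟩ ≤ 1)
    (ha : ∀ i, 0 ≤ a i)
    (hsum : ∀ k : ℕ, k < N →
      ((N : ℝ) - k) ≤ ∑ i ∈ Finset.univ.filter (fun i : Fin N => k ≤ (i : ℕ)), a i) :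
    ∏ i, μ i ^ a i ≤ ∏ i, μ i := by
  rcases Nat.eq_zero_or_pos N with h0 | h0
  · subst h0; simp
  have hμ1 : ∀ i : Fin N, μ i ≤ 1 := by
    intro i
    exact le_trans (hmono ⟨0, h0⟩ i (by simp [Fin.le_def])) (hfirst h0)
  set x : ℕ → ℝ := fun i => - Real.log (μ ⟨min i (N-1), by omega⟩) with hxdef
  set a' : ℕ → ℝ := fun i => if h : i < N then a ⟨i, h⟩ else 0 with ha'def
  have hxmono : ∀ i j : ℕ, i ≤ j → x i ≤ x j := by
    intro i j hij
    simp only [hxdef, neg_le_neg_iff]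
    apply Real.log_le_log (hμ _)
    exact hmono _ _ (by simp only [Fin.mk_le_mk]; omega)
  have hx0 : 0 ≤ x 0 := by
    simp only [hxdef]
    have := Real.log_nonpos (le_of_lt (hμ _)) (hμ1 ⟨min 0 (N-1), by omega⟩)
    linarith
  have ha' : ∀ i, 0 ≤ a' i := by
    intro i; simp only [ha'def]
    split
    · exact ha _
    · exact le_refl 0
  have haa : ∀ i : Fin N, a' i.val = a i := by
    intro i; simp only [ha'def, i.isLt, dif_pos, Fin.eta]
  have hxx : ∀ i : Fin N, x i.val = - Real.log (μ i) := by
    intro i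
    simp only [hxdef]
    have : (⟨min i.val (N-1), by omega⟩ : Fin N) = i := by
      ext; simp only []; omega
    rw [this]
  have hsum' : ∀ k : ℕ, k ≤ N → ((N : ℝ) - k) ≤ ∑ i ∈ Finset.Ico k N, a' i := by
    intro k hk
    rcases eq_or_lt_of_le hk with rfl | hk
    · simp
    have h1 := hsum k hk
    have e : ∑ i ∈ Finset.univ.filter (fun i : Fin N => k ≤ (i : ℕ)), a i
        = ∑ i ∈ Finset.Ico k N, a' i := by
      rw [Finset.sum_filter]
      have e2 : ∀ i : Fin N, (if k ≤ (i : ℕ) then a i else 0)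
          = (fun n : ℕ => if k ≤ n then a' n else 0) i.val := by
        intro i; simp only [haa i]
      rw [Finset.sum_congr rfl (fun i _ => e2 i),
        Fin.sum_univ_eq_sum_range (fun n : ℕ => if k ≤ n then a' n else 0) N,
        ← Finset.sum_filter]
      congr 1
      ext m
      simp only [Finset.mem_filter, Finset.mem_range, Finset.mem_Ico]
      omega
    rw [← e]
    exact h1
  have hkey := key_tail_sum N x a' hxmono hx0 ha' hsum'
  have eL : ∑ i : Fin N, Real.log (μ i) * a i
      = - ∑ i ∈ Finset.range N, a' i * x i := by
    rw [← Fin.sum_univ_eq_sum_range (fun n => a' n * x n) N, ← Finset.sum_neg_distrib]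
    exact Finset.sum_congr rfl (fun i _ => by rw [haa i, hxx i]; ring)
  have eR : ∑ i : Fin N, Real.log (μ i)
      = - ∑ i ∈ Finset.range N, x i := by
    rw [← Fin.sum_univ_eq_sum_range x N, ← Finset.sum_neg_distrib]
    exact Finset.sum_congr rfl (fun i _ => by rw [hxx i]; ring)
  have hP1 : ∏ i, μ i ^ a i = Real.exp (∑ i : Fin N, Real.log (μ i) * a i) := by
    rw [Real.exp_sum]
    exact Finset.prod_congr rfl (fun i _ => Real.rpow_def_of_pos (hμ i) (a i))
  have hP2 : ∏ i, μ i = Real.exp (∑ i : Fin N, Real.log (μ i)) := by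
    rw [Real.exp_sum]
    exact Finset.prod_congr rfl (fun i _ => (Real.exp_log (hμ i)).symm)
  rw [hP1, hP2, Real.exp_le_exp, eL, eR]
  linarith
end

section
/- Let (L, p) be a Brascamp–Lieb datum on ℝⁿ satisfying the scaling condition Σ_j p_j n_j = n. Then the localised Brascamp–Lieb constant equals the global one: the best constant C in ∫_{|x| ≤ 1} ∏_j (f_j ∘ L_j)^{p_j} ≤ C ∏_j (∫ f_j)^{p_j} over all nonnegative f_j ∈ L¹(ℝ^{n_j}) equals the best constant in the same inequality with the integral taken over all of ℝⁿ. -/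
open MeasureTheory
open scoped ENNReal

/-- Scaling of lintegrals on Euclidean space. -/
lemma BL_lintegral_comp_smul (d : ℕ) (g : EuclideanSpace ℝ (Fin d) → ℝ≥0∞)
    (hg : Measurable g) {R : ℝ} (hR : 0 < R) :
    ∫⁻ x, g (R • x) = ENNReal.ofReal ((R ^ d)⁻¹) * ∫⁻ x, g x := by
  have hmap := Measure.map_addHaar_smul (volume : Measure (EuclideanSpace ℝ (Fin d))) hR.ne'
  rw [← lintegral_map hg (measurable_const_smul R), hmap, lintegral_smul_measure]
  congr 2
  rw [finrank_euclideanSpace_fin, abs_of_nonneg (inv_nonneg.2 (pow_nonneg hR.le _))]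

/-- Scaling of set lintegrals over balls on Euclidean space. -/
lemma BL_setLIntegral_comp_smul (d : ℕ) (h : EuclideanSpace ℝ (Fin d) → ℝ≥0∞)
    (hh : Measurable h) {R : ℝ} (hR : 0 < R) :
    ∫⁻ x in Metric.closedBall (0 : EuclideanSpace ℝ (Fin d)) 1, h (R • x)
      = ENNReal.ofReal ((R ^ d)⁻¹) *
        ∫⁻ x in Metric.closedBall (0 : EuclideanSpace ℝ (Fin d)) R, h x := by
  have hmem : ∀ x : EuclideanSpace ℝ (Fin d),
      x ∈ Metric.closedBall (0 : EuclideanSpace ℝ (Fin d)) 1 ↔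
        R • x ∈ Metric.closedBall (0 : EuclideanSpace ℝ (Fin d)) R := by
    intro x
    simp only [mem_closedBall_zero_iff, norm_smul, Real.norm_eq_abs,
      abs_of_pos hR]
    constructor
    · intro hx
      calc R * ‖x‖ ≤ R * 1 := by gcongr
        _ = R := mul_one R
    · intro hx
      by_contra hcon
      push_neg at hcon
      have : R * 1 < R * ‖x‖ := by gcongr
      rw [mul_one] at this; exact absurd hx (not_le.2 this)
  rw [← lintegral_indicator measurableSet_closedBall,
      ← lintegral_indicator measurableSet_closedBall]
  have heq : (Metric.closedBall (0 : EuclideanSpace ℝ (Fin d)) 1).indicator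
        (fun x => h (R • x))
      = fun x => (Metric.closedBall (0 : EuclideanSpace ℝ (Fin d)) R).indicator h (R • x) := by
    funext x
    by_cases hx : x ∈ Metric.closedBall (0 : EuclideanSpace ℝ (Fin d)) 1
    · rw [Set.indicator_of_mem hx, Set.indicator_of_mem ((hmem x).1 hx)]
    · rw [Set.indicator_of_notMem hx,
        Set.indicator_of_notMem (fun hc => hx ((hmem x).2 hc))]
  rw [heq]
  exact BL_lintegral_comp_smul d _ (hh.indicator measurableSet_closedBall) hR

/-- Under the scaling condition `Σ_j p_j n_j = n`, the best constant in the localised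
Brascamp--Lieb inequality (integration over the unit ball) equals the best constant in
the global Brascamp--Lieb inequality. -/
theorem localised_BL_constant_eq_global
    (n m : ℕ) (nj : Fin m → ℕ) (p : Fin m → ℝ)
    (hp : ∀ j, p j ∈ Set.Icc (0 : ℝ) 1)
    (L : ∀ j, EuclideanSpace ℝ (Fin n) →L[ℝ] EuclideanSpace ℝ (Fin (nj j)))
    (hsurj : ∀ j, Function.Surjective (L j))
    (hscaling : ∑ j, p j * (nj j : ℝ) = (n : ℝ)) :
    sInf {C : ℝ≥0∞ |
        ∀ f : ∀ j, EuclideanSpace ℝ (Fin (nj j)) → ℝ≥0∞,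
          (∀ j, Measurable (f j)) → (∀ j, ∫⁻ y, f j y < ⊤) →
          ∫⁻ x in Metric.closedBall (0 : EuclideanSpace ℝ (Fin n)) 1,
              ∏ j, (f j ((L j) x)) ^ (p j) ≤
            C * ∏ j, (∫⁻ y, f j y) ^ (p j)} =
      sInf {C : ℝ≥0∞ |
        ∀ f : ∀ j, EuclideanSpace ℝ (Fin (nj j)) → ℝ≥0∞,
          (∀ j, Measurable (f j)) → (∀ j, ∫⁻ y, f j y < ⊤) →
          ∫⁻ x, ∏ j, (f j ((L j) x)) ^ (p j) ≤
            C * ∏ j, (∫⁻ y, f j y) ^ (p j)} := by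
  apply le_antisymm
  · -- global constant works locally
    apply sInf_le_sInf
    intro C hC f hmeas hfin
    exact le_trans (setLIntegral_le_lintegral _ _) (hC f hmeas hfin)
  · -- local constant works globally, by scaling
    apply sInf_le_sInf
    intro C hC f hmeas hfin
    set h : EuclideanSpace ℝ (Fin n) → ℝ≥0∞ := fun x => ∏ j, (f j ((L j) x)) ^ (p j) with hh
    set I : ℝ≥0∞ := ∏ j, (∫⁻ y, f j y) ^ (p j) with hI
    have hhmeas : Measurable h := by
      apply Finset.measurable_prod
      intro j _
      exact ((hmeas j).comp (L j).continuous.measurable).pow_const _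
    -- step 1 : for every R > 0, the integral over the ball of radius R is at most C * I
    have step1 : ∀ R : ℝ, 0 < R →
        ∫⁻ x in Metric.closedBall (0 : EuclideanSpace ℝ (Fin n)) R, h x ≤ C * I := by
      intro R hR
      set g : ∀ j, EuclideanSpace ℝ (Fin (nj j)) → ℝ≥0∞ := fun j y => f j (R • y) with hg
      have hgmeas : ∀ j, Measurable (g j) := fun j =>
        (hmeas j).comp (measurable_const_smul R)
      have hgint : ∀ j, ∫⁻ y, g j y = ENNReal.ofReal ((R ^ (nj j))⁻¹) * ∫⁻ y, f j y :=
        fun j => BL_lintegral_comp_smul (nj j) (f j) (hmeas j) hR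
      have hgfin : ∀ j, ∫⁻ y, g j y < ⊤ := by
        intro j
        rw [hgint j]
        exact ENNReal.mul_lt_top ENNReal.ofReal_lt_top (hfin j)
      have key := hC g hgmeas hgfin
      -- rewrite the left-hand side
      have hL : ∀ x : EuclideanSpace ℝ (Fin n),
          (∏ j, (g j ((L j) x)) ^ (p j)) = h (R • x) := by
        intro x
        simp only [hg, hh]
        refine Finset.prod_congr rfl fun j _ => ?_
        congr 1
        rw [← map_smul (L j)]
      have hLHS : ∫⁻ x in Metric.closedBall (0 : EuclideanSpace ℝ (Fin n)) 1,
          ∏ j, (g j ((L j) x)) ^ (p j)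
          = ENNReal.ofReal ((R ^ n)⁻¹) *
            ∫⁻ x in Metric.closedBall (0 : EuclideanSpace ℝ (Fin n)) R, h x := by
        rw [show (fun x => ∏ j, (g j ((L j) x)) ^ (p j)) = fun x => h (R • x) from funext hL]
        exact BL_setLIntegral_comp_smul n h hhmeas hR
      -- rewrite the right-hand side
      have hprod : (∏ j, (ENNReal.ofReal ((R ^ (nj j))⁻¹)) ^ (p j))
          = ENNReal.ofReal ((R ^ n)⁻¹) := by
        have h1 : ∀ j : Fin m, (ENNReal.ofReal ((R ^ (nj j))⁻¹)) ^ (p j)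
            = ENNReal.ofReal (R ^ (-((nj j : ℝ) * p j))) := by
          intro j
          rw [ENNReal.ofReal_rpow_of_pos (inv_pos.2 (pow_pos hR _))]
          congr 1
          rw [← Real.rpow_natCast R (nj j), ← Real.rpow_neg hR.le,
            ← Real.rpow_mul hR.le, neg_mul]
        simp only [h1]
        rw [← ENNReal.ofReal_prod_of_nonneg
          (fun j _ => Real.rpow_nonneg hR.le _)]
        congr 1
        rw [← Real.rpow_sum_of_pos hR]
        rw [show (∑ j, -((nj j : ℝ) * p j)) = -(n : ℝ) by
          rw [← hscaling, ← Finset.sum_neg_distrib]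
          exact Finset.sum_congr rfl fun j _ => by ring]
        rw [Real.rpow_neg hR.le, Real.rpow_natCast]
      have hRHS : (∏ j, (∫⁻ y, g j y) ^ (p j))
          = ENNReal.ofReal ((R ^ n)⁻¹) * I := by
        calc (∏ j, (∫⁻ y, g j y) ^ (p j))
            = ∏ j, ((ENNReal.ofReal ((R ^ (nj j))⁻¹)) ^ (p j) * (∫⁻ y, f j y) ^ (p j)) := by
              refine Finset.prod_congr rfl fun j _ => ?_
              rw [hgint j, ENNReal.mul_rpow_of_nonneg _ _ (hp j).1]
          _ = (∏ j, (ENNReal.ofReal ((R ^ (nj j))⁻¹)) ^ (p j)) * I := by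
              rw [Finset.prod_mul_distrib, hI]
          _ = ENNReal.ofReal ((R ^ n)⁻¹) * I := by rw [hprod]
      rw [hLHS, hRHS] at key
      have ha0 : ENNReal.ofReal ((R ^ n)⁻¹) ≠ 0 :=
        (ENNReal.ofReal_pos.2 (inv_pos.2 (pow_pos hR _))).ne'
      have haT : ENNReal.ofReal ((R ^ n)⁻¹) ≠ ⊤ := ENNReal.ofReal_ne_top
      rw [show C * (ENNReal.ofReal ((R ^ n)⁻¹) * I)
            = ENNReal.ofReal ((R ^ n)⁻¹) * (C * I) by ring] at key
      exact (ENNReal.mul_le_mul_iff_right ha0 haT).1 key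
    -- step 2 : pass to the limit R → ∞
    set ν : Measure (EuclideanSpace ℝ (Fin n)) :=
      (volume : Measure (EuclideanSpace ℝ (Fin n))).withDensity h with hν
    have hνball : ∀ R : ℝ,
        ν (Metric.closedBall (0 : EuclideanSpace ℝ (Fin n)) R)
          = ∫⁻ x in Metric.closedBall (0 : EuclideanSpace ℝ (Fin n)) R, h x :=
      fun R => withDensity_apply h measurableSet_closedBall
    have hmono : Monotone (fun k : ℕ =>
        Metric.closedBall (0 : EuclideanSpace ℝ (Fin n)) ((k : ℝ) + 1)) := by
      intro a b hab
      have : (a : ℝ) ≤ (b : ℝ) := Nat.cast_le.2 hab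
      exact Metric.closedBall_subset_closedBall (by linarith)
    have hunion : (⋃ k : ℕ, Metric.closedBall (0 : EuclideanSpace ℝ (Fin n)) ((k : ℝ) + 1))
        = Set.univ := by
      apply Set.eq_univ_iff_forall.2
      intro x
      rw [Set.mem_iUnion]
      refine ⟨⌈‖x‖⌉₊, ?_⟩
      rw [mem_closedBall_zero_iff]
      calc ‖x‖ ≤ (⌈‖x‖⌉₊ : ℝ) := Nat.le_ceil _
        _ ≤ (⌈‖x‖⌉₊ : ℝ) + 1 := by linarith
    calc ∫⁻ x, h x = ν Set.univ := by
          rw [hν, withDensity_apply h MeasurableSet.univ, Measure.restrict_univ]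
      _ = ⨆ k : ℕ, ν (Metric.closedBall (0 : EuclideanSpace ℝ (Fin n)) ((k : ℝ) + 1)) := by
          rw [← hunion]
          exact (hmono.directed_le).measure_iUnion
      _ ≤ C * I := by
          apply iSup_le
          intro k
          rw [hνball]
          exact step1 _ (by positivity)
end

section
/- Let μ_1 ≥ ... ≥ μ_n ≥ γ > 0 and a_1, ..., a_n ≥ 0 with Σ_{i=1}^k a_i ≤ k for all 1 ≤ k ≤ n, and suppose additionally Σ_{i=1}^n a_i = s. Then ∏_{i=1}^n μ_i^{a_i} ≤ γ^{s − n} ∏_{i=1}^n μ_i. -/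
/-- Summing a `dite`-extended function over `range n` equals summing over `Fin n`. -/
lemma sum_fin_dite (n : ℕ) (f : Fin n → ℝ) :
    ∑ i ∈ Finset.range n, (if h : i < n then f ⟨i, h⟩ else 0) = ∑ i, f i := by
  rw [← Fin.sum_univ_eq_sum_range (fun j => if h : j < n then f ⟨j, h⟩ else 0)]
  exact Finset.sum_congr rfl fun i _ => by simp [i.isLt]

/-- Abel-type inequality: if `x` is nonincreasing and nonnegative on `range n`,
`b` is nonnegative, and partial sums of `b` are bounded by index counts, then
`∑ b i * x i ≤ ∑ x i`. -/
lemma aux_abel (x b : ℕ → ℝ) :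
    ∀ n : ℕ, (∀ i j : ℕ, i ≤ j → j < n → x j ≤ x i) →
    (∀ i, i < n → 0 ≤ x i) → (∀ i, i < n → 0 ≤ b i) →
    (∀ k, k < n → ∑ i ∈ Finset.range (k + 1), b i ≤ (k : ℝ) + 1) →
    ∑ i ∈ Finset.range n, b i * x i ≤ ∑ i ∈ Finset.range n, x i := by
  intro n
  induction n generalizing x with
  | zero => simp
  | succ n ih =>
    intro hmono hx hb hsum
    have key := ih (fun i => x i - x n)
      (fun i j hij hj => by
        have := hmono i j hij (by omega)
        show x j - x n ≤ x i - x n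
        linarith)
      (fun i hi => by
        have := hmono i n (by omega) (by omega)
        show (0:ℝ) ≤ x i - x n
        linarith)
      (fun i hi => hb i (by omega))
      (fun k hk => hsum k (by omega))
    have hbs : ∑ i ∈ Finset.range (n + 1), b i ≤ (n : ℝ) + 1 := hsum n (by omega)
    have hxn : 0 ≤ x n := hx n (by omega)
    have e0 : ∑ i ∈ Finset.range n, b i * (x i - x n) =
        (∑ i ∈ Finset.range n, b i * x i) - (∑ i ∈ Finset.range n, b i) * x n := by
      rw [Finset.sum_mul, ← Finset.sum_sub_distrib]
      exact Finset.sum_congr rfl fun i _ => by ring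
    have e1 : ∑ i ∈ Finset.range (n + 1), b i * x i =
        (∑ i ∈ Finset.range n, b i * (x i - x n)) +
          x n * ∑ i ∈ Finset.range (n + 1), b i := by
      rw [e0, Finset.sum_range_succ (fun i => b i * x i), Finset.sum_range_succ b]
      ring
    calc ∑ i ∈ Finset.range (n + 1), b i * x i
        = (∑ i ∈ Finset.range n, b i * (x i - x n)) +
            x n * ∑ i ∈ Finset.range (n + 1), b i := e1
      _ ≤ (∑ i ∈ Finset.range n, (x i - x n)) + x n * ((n : ℝ) + 1) := by
          gcongr
      _ = ∑ i ∈ Finset.range (n + 1), x i := by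
          rw [Finset.sum_sub_distrib, Finset.sum_range_succ x]
          simp
          ring

/-- Rescaled telescoping inequality: if `μ₁ ≥ ... ≥ μ_n ≥ γ > 0`, `a_i ≥ 0`,
`Σ_{i ≤ k} a_i ≤ k` for all `k`, and `Σ a_i = s`, then
`Π μ_i ^ a_i ≤ γ^{s - n} Π μ_i`. -/
theorem prod_rpow_le_gamma_pow_mul_prod
    (n : ℕ) (μ a : Fin n → ℝ) (γ s : ℝ) (hγ : 0 < γ)
    (hmono : ∀ i j : Fin n, i ≤ j → μ j ≤ μ i)
    (hμ : ∀ i, γ ≤ μ i) (ha : ∀ i, 0 ≤ a i)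
    (hsum : ∀ k : Fin n,
      ∑ i ∈ Finset.univ.filter (fun i : Fin n => i ≤ k), a i ≤ (k : ℕ) + 1)
    (hs : ∑ i, a i = s) :
    ∏ i, μ i ^ a i ≤ γ ^ (s - (n : ℝ)) * ∏ i, μ i := by
  have hμpos : ∀ i, 0 < μ i := fun i => lt_of_lt_of_le hγ (hμ i)
  set b : ℕ → ℝ := fun i => if h : i < n then a ⟨i, h⟩ else 0 with hb_def
  set x : ℕ → ℝ := fun i => if h : i < n then Real.log (μ ⟨i, h⟩) - Real.log γ else 0
    with hx_def
  have key : ∑ i ∈ Finset.range n, b i * x i ≤ ∑ i ∈ Finset.range n, x i := by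
    apply aux_abel
    · intro i j hij hj
      simp only [hx_def, dif_pos hj, dif_pos (lt_of_le_of_lt hij hj)]
      have h1 := hmono ⟨i, lt_of_le_of_lt hij hj⟩ ⟨j, hj⟩ hij
      have h2 := Real.log_le_log (hμpos _) h1
      linarith
    · intro i hi
      simp only [hx_def, dif_pos hi]
      have := Real.log_le_log hγ (hμ ⟨i, hi⟩)
      linarith
    · intro i hi
      simp only [hb_def, dif_pos hi]
      exact ha _
    · intro k hk
      have hE : ∑ i ∈ Finset.range (k + 1), b i =
          ∑ i ∈ Finset.univ.filter (fun i : Fin n => i ≤ (⟨k, hk⟩ : Fin n)), a i := by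
        rw [Finset.sum_filter,
          ← sum_fin_dite n (fun i => if i ≤ (⟨k, hk⟩ : Fin n) then a i else 0)]
        rw [← Finset.sum_subset (Finset.range_subset_range.mpr hk)]
        · apply Finset.sum_congr rfl
          intro i hi
          have hi' : i < k + 1 := Finset.mem_range.mp hi
          have hin : i < n := by omega
          simp only [hb_def, dif_pos hin,
            if_pos (show (⟨i, hin⟩ : Fin n) ≤ ⟨k, hk⟩ from Fin.mk_le_mk.mpr (by omega))]
        · intro i hi hi'
          have hin : i < n := Finset.mem_range.mp hi
          have hik : ¬ i ≤ k := by
            simp only [Finset.mem_range] at hi'; omega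
          simp only [dif_pos hin, if_neg (show ¬ (⟨i, hin⟩ : Fin n) ≤ ⟨k, hk⟩ by
            rw [Fin.mk_le_mk]; exact hik)]
      have := hsum ⟨k, hk⟩
      rw [hE]
      simpa using this
  have hbx : ∑ i ∈ Finset.range n, b i * x i =
      ∑ i : Fin n, a i * (Real.log (μ i) - Real.log γ) := by
    rw [← sum_fin_dite n (fun i => a i * (Real.log (μ i) - Real.log γ))]
    apply Finset.sum_congr rfl
    intro i hi
    have hin : i < n := Finset.mem_range.mp hi
    simp [hb_def, hx_def, hin]
  have hxx : ∑ i ∈ Finset.range n, x i =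
      ∑ i : Fin n, (Real.log (μ i) - Real.log γ) := by
    rw [← sum_fin_dite n (fun i => Real.log (μ i) - Real.log γ)]
  rw [hbx, hxx] at key
  have hL : ∑ i : Fin n, a i * Real.log (μ i) ≤
      (s - n) * Real.log γ + ∑ i : Fin n, Real.log (μ i) := by
    have h1 : ∑ i : Fin n, a i * (Real.log (μ i) - Real.log γ) =
        (∑ i : Fin n, a i * Real.log (μ i)) - s * Real.log γ := by
      rw [← hs, Finset.sum_mul, ← Finset.sum_sub_distrib]
      exact Finset.sum_congr rfl fun i _ => by ring
    have h2 : ∑ i : Fin n, (Real.log (μ i) - Real.log γ) =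
        (∑ i : Fin n, Real.log (μ i)) - n * Real.log γ := by
      rw [Finset.sum_sub_distrib]
      simp
    rw [h1, h2] at key
    linarith
  have e1 : ∏ i, μ i ^ a i = Real.exp (∑ i : Fin n, a i * Real.log (μ i)) := by
    rw [Real.exp_sum]
    apply Finset.prod_congr rfl
    intro i _
    rw [Real.rpow_def_of_pos (hμpos i)]
    ring_nf
  have e2 : γ ^ (s - (n : ℝ)) * ∏ i, μ i =
      Real.exp ((s - n) * Real.log γ + ∑ i : Fin n, Real.log (μ i)) := by
    rw [Real.exp_add, Real.exp_sum, Real.rpow_def_of_pos hγ]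
    congr 1
    · ring_nf
    · exact Finset.prod_congr rfl fun i _ => (Real.exp_log (hμpos i)).symm
  rw [e1, e2]
  exact Real.exp_le_exp.mpr hL
end

section
/- Let Q ⊂ ℝⁿ be a cube of sidelength δ/ν (0 < δ ≤ ν ≤ 1), and let T be the δ-neighbourhood of an affine subspace A + x₀ of ℝⁿ, where the linear part A is within distance ν (in the Grassmannian metric, i.e., in operator-norm distance of orthogonal projections) of a fixed subspace V. If T ∩ Q ≠ ∅, then there exists a translate V + y of V such that T ∩ Q is contained in the Cδ-neighbourhood of V + y, where C depends only on n. -/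
/-!
Fix a point `p ∈ T ∩ Q` and take `p + V` as the parallel slab. For `x ∈ T ∩ Q`, the distance from
`x` to `p + V` is `‖P_{V⊥}(x - p)‖`, and `P_{V⊥} = P_{A⊥} + (P_A - P_V)`. The first term is at most
`2δ`, since both `x` and `p` lie within `δ` of `x₀ + A`; the second is at most `ν ‖x - p‖ ≤ √n δ`,
because `x` and `p` lie in a cube of sidelength `δ/ν`. The tilt `ν` is exactly compensated by the
size of the cube, giving `C = √n + 2`.
-/

/-- The orthogonal projection onto a subspace, as a continuous linear map on the
ambient Euclidean space. -/
noncomputable def projCLM {n : ℕ} (K : Submodule ℝ (EuclideanSpace ℝ (Fin n))) :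
    EuclideanSpace ℝ (Fin n) →L[ℝ] EuclideanSpace ℝ (Fin n) :=
  K.subtypeL.comp K.orthogonalProjectionOnto

section Projection

variable {E : Type*} [NormedAddCommGroup E] [InnerProductSpace ℝ E]

theorem Submodule.starProjection_orthogonal_apply (K : Submodule ℝ E) [K.HasOrthogonalProjection]
    (v : E) : Kᗮ.starProjection v = v - K.starProjection v := by
  rw [K.starProjection_orthogonal]
  rfl

theorem Submodule.infDist_translate_eq_norm_starProjection_orthogonal (K : Submodule ℝ E)
    [K.HasOrthogonalProjection] (x y : E) :
    Metric.infDist x {z | z - y ∈ K} = ‖Kᗮ.starProjection (x - y)‖ := by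
  rw [K.starProjection_orthogonal_apply]
  apply le_antisymm
  · have hmem : y + K.starProjection (x - y) ∈ {z | z - y ∈ K} := by
      simpa using K.starProjection_apply_mem (x - y)
    refine (Metric.infDist_le_dist_of_mem hmem).trans_eq ?_
    rw [dist_eq_norm, sub_add_eq_sub_sub]
  · refine (Metric.le_infDist ⟨y, by simp⟩).2 fun z (hz : z - y ∈ K) ↦ ?_
    calc ‖x - y - K.starProjection (x - y)‖ = ⨅ w : K, ‖x - y - w‖ := K.starProjection_minimal _
      _ ≤ ‖x - y - (z - y)‖ :=
          ciInf_le ⟨0, Set.forall_mem_range.2 fun _ ↦ norm_nonneg _⟩ (⟨z - y, hz⟩ : K)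
      _ = dist x z := by rw [sub_sub_sub_cancel_right, dist_eq_norm]

theorem Submodule.norm_starProjection_orthogonal_le (A V : Submodule ℝ E)
    [A.HasOrthogonalProjection] [V.HasOrthogonalProjection] (v : E) :
    ‖Vᗮ.starProjection v‖ ≤
      ‖Aᗮ.starProjection v‖ + ‖A.starProjection - V.starProjection‖ * ‖v‖ := by
  have hsplit : Vᗮ.starProjection v =
      Aᗮ.starProjection v + (A.starProjection - V.starProjection) v := by
    rw [V.starProjection_orthogonal_apply, A.starProjection_orthogonal_apply, sub_apply]
    abel
  rw [hsplit]
  exact (norm_add_le _ _).trans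
    (add_le_add_right ((A.starProjection - V.starProjection).le_opNorm v) _)

end Projection

theorem EuclideanSpace.norm_le_sqrt_card_mul {ι : Type*} [Fintype ι] {v : EuclideanSpace ℝ ι}
    {r : ℝ} (hr : 0 ≤ r) (hv : ∀ i, |v i| ≤ r) : ‖v‖ ≤ √(Fintype.card ι) * r := by
  rw [EuclideanSpace.norm_eq, ← Real.sqrt_sq hr, ← Real.sqrt_mul (Nat.cast_nonneg _)]
  gcongr
  calc ∑ i, ‖v i‖ ^ 2 ≤ ∑ _i : ι, r ^ 2 := by
        gcongr with i
        rw [Real.norm_eq_abs]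
        exact hv i
    _ = Fintype.card ι * r ^ 2 := by simp

/-- Within a cube of sidelength `δ/ν`, the `δ`-neighbourhood of an affine subspace
whose direction `A` is within distance `ν` (in operator norm of orthogonal
projections) of a fixed subspace `V` is contained in the `Cδ`-neighbourhood of a
translate of `V`, with `C` depending only on `n`. -/
theorem tilted_slab_in_cube_contained_in_parallel_slab (n : ℕ) :
    ∃ C > (0 : ℝ), ∀ δ ν : ℝ, 0 < δ → δ ≤ ν → ν ≤ 1 →
      ∀ A V : Submodule ℝ (EuclideanSpace ℝ (Fin n)),
        Module.finrank ℝ A = Module.finrank ℝ V →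
        ‖projCLM A - projCLM V‖ ≤ ν →
        ∀ x₀ q : EuclideanSpace ℝ (Fin n),
          let Q : Set (EuclideanSpace ℝ (Fin n)) :=
            {x | ∀ i, |x i - q i| ≤ δ / (2 * ν)}
          let T : Set (EuclideanSpace ℝ (Fin n)) :=
            {x | Metric.infDist x {z | z - x₀ ∈ (A : Set (EuclideanSpace ℝ (Fin n)))} ≤ δ}
          (T ∩ Q).Nonempty →
          ∃ y, T ∩ Q ⊆
            {x | Metric.infDist x
                {z | z - y ∈ (V : Set (EuclideanSpace ℝ (Fin n)))} ≤ C * δ} := by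
  refine ⟨√n + 2, by positivity, fun δ ν hδ hδν _ A V _ hAV x₀ q ↦ ?_⟩
  rintro Q T ⟨p, hpT, hpQ⟩
  refine ⟨p, fun x ⟨hxT, hxQ⟩ ↦ ?_⟩
  have hν : 0 < ν := hδ.trans_le hδν
  simp only [T, Set.mem_ofPred_eq, SetLike.mem_coe,
    A.infDist_translate_eq_norm_starProjection_orthogonal] at hxT hpT
  have hxp : ‖x - p‖ ≤ √n * (δ / ν) := by
    have hcoord (i : Fin n) : |(x - p) i| ≤ δ / ν :=
      calc |x i - p i| ≤ |x i - q i| + |q i - p i| := abs_sub_le _ _ _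
        _ ≤ δ / (2 * ν) + δ / (2 * ν) := add_le_add (hxQ i) (abs_sub_comm (p i) _ ▸ hpQ i)
        _ = δ / ν := by field_simp; ring
    simpa using EuclideanSpace.norm_le_sqrt_card_mul (by positivity) hcoord
  have hxpA : ‖Aᗮ.starProjection (x - p)‖ ≤ 2 * δ := by
    rw [← sub_sub_sub_cancel_right x p x₀, map_sub]
    linarith [norm_sub_le (Aᗮ.starProjection (x - x₀)) (Aᗮ.starProjection (p - x₀))]
  simp only [Set.mem_ofPred_eq, SetLike.mem_coe,
    V.infDist_translate_eq_norm_starProjection_orthogonal]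
  calc ‖Vᗮ.starProjection (x - p)‖
      ≤ ‖Aᗮ.starProjection (x - p)‖ + ‖A.starProjection - V.starProjection‖ * ‖x - p‖ :=
        A.norm_starProjection_orthogonal_le V _
    _ ≤ 2 * δ + ν * (√n * (δ / ν)) := by gcongr; exact hAV
    _ = (√n + 2) * δ := by field_simp; ring
end
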